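/- arXiv:1305.1015 — 6 statements merged into one kernel-verified Lean document; each statement's English description precedes it below -/
import Mathlib

section
/- Let A ∈ M_m(ℂ) and B ∈ M_n(ℂ) be Hermitian and suppose U_A ⊗ U_B does not have 1 as an eigenvalue. Then the matrix g(A,B) = i(U_A* ⊗ I_n - I_m ⊗ U_B)^{-1}(U_A* ⊗ I_n + I_m ⊗ U_B) is Hermitian and its Cayley transform satisfies U_{g(A,B)} = U_A ⊗ U_B. -/
open Matrix Kronecker Complex

noncomputable def cayley {n : Type*} [Fintype n] [DecidableEq n]
    (A : Matrix n n ℂ) : Matrix n n ℂ :=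
  (A - Complex.I • 1) * (A + Complex.I • 1)⁻¹

namespace CayleyAux

variable {n : Type*} [Fintype n] [DecidableEq n]

lemma kronecker_conjTranspose {m : Type*} [Fintype m] [DecidableEq m]
    (A : Matrix m m ℂ) (B : Matrix n n ℂ) : (A ⊗ₖ B)ᴴ = Aᴴ ⊗ₖ Bᴴ := by
  ext ⟨i1, i2⟩ ⟨j1, j2⟩
  simp [conjTranspose_apply, mul_comm]

lemma key_prod (A : Matrix n n ℂ) :
    (A + Complex.I • 1) * (A - Complex.I • 1) = A * A + 1 := by
  simp only [mul_sub, add_mul, Matrix.smul_mul, Matrix.mul_smul, smul_smul,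
    Complex.I_mul_I, one_mul, mul_one, neg_smul, one_smul]
  abel

lemma key_prod' (A : Matrix n n ℂ) :
    (A - Complex.I • 1) * (A + Complex.I • 1) = A * A + 1 := by
  simp only [sub_mul, mul_add, Matrix.smul_mul, Matrix.mul_smul, smul_smul,
    Complex.I_mul_I, one_mul, mul_one, neg_smul, one_smul]
  abel

open scoped ComplexOrder in
lemma isUnit_factors {A : Matrix n n ℂ} (hA : A.IsHermitian) :
    IsUnit (A + Complex.I • 1) ∧ IsUnit (A - Complex.I • 1) := by
  have hpd : (A * A + 1).PosDef := by
    have h1 : (A * A).PosSemidef := by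
      have := Matrix.posSemidef_conjTranspose_mul_self A
      rwa [hA.eq] at this
    exact Matrix.PosDef.posSemidef_add h1 Matrix.PosDef.one
  have hu : IsUnit ((A + Complex.I • 1) * (A - Complex.I • 1)) := by
    rw [key_prod]; exact hpd.isUnit
  rw [Matrix.isUnit_iff_isUnit_det, Matrix.det_mul] at hu
  exact ⟨(Matrix.isUnit_iff_isUnit_det _).2 (isUnit_of_mul_isUnit_left hu),
    (Matrix.isUnit_iff_isUnit_det _).2 (isUnit_of_mul_isUnit_right hu)⟩

lemma cayley_conjTranspose_mul_self {A : Matrix n n ℂ} (hA : A.IsHermitian) :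
    (cayley A)ᴴ * cayley A = 1 := by
  obtain ⟨hP, hM⟩ := isUnit_factors hA
  have hPd := (Matrix.isUnit_iff_isUnit_det _).1 hP
  have hMd := (Matrix.isUnit_iff_isUnit_det _).1 hM
  have hct : (A + Complex.I • 1)ᴴ = A - Complex.I • 1 := by
    rw [conjTranspose_add, conjTranspose_smul, conjTranspose_one, hA.eq, Complex.star_def,
      Complex.conj_I, neg_smul, ← sub_eq_add_neg]
  have hcay : (cayley A)ᴴ = (A - Complex.I • 1)⁻¹ * (A + Complex.I • 1) := by
    rw [cayley, conjTranspose_mul, Matrix.conjTranspose_nonsing_inv, hct,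
      ← hct, conjTranspose_conjTranspose]
  rw [hcay, cayley, mul_assoc, ← mul_assoc (A + Complex.I • 1), key_prod, ← key_prod',
    mul_assoc, Matrix.mul_nonsing_inv _ hPd, mul_one, Matrix.nonsing_inv_mul _ hMd]

/-- Main lemma: inverse Cayley transform of a unitary without eigenvalue 1. -/
lemma main {W : Matrix n n ℂ} (hW : Wᴴ * W = 1) (h1 : IsUnit (1 - W)) :
    (Complex.I • ((1 - W)⁻¹ * (1 + W))).IsHermitian ∧
      cayley (Complex.I • ((1 - W)⁻¹ * (1 + W))) = W := by
  have hW' : W * Wᴴ = 1 := mul_eq_one_comm.mp hW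
  have h1d := (Matrix.isUnit_iff_isUnit_det _).1 h1
  have hinv : (1 - W) * (1 - W)⁻¹ = 1 := Matrix.mul_nonsing_inv _ h1d
  have hinv' : (1 - W)⁻¹ * (1 - W) = 1 := Matrix.nonsing_inv_mul _ h1d
  have hc : W * (1 - W)⁻¹ = (1 - W)⁻¹ * W := by
    have h2 : (1 - W)⁻¹ * ((1 - W) * W) * (1 - W)⁻¹ = W * (1 - W)⁻¹ := by
      rw [← mul_assoc, hinv', one_mul]
    have h3 : (1 - W)⁻¹ * (W * (1 - W)) * (1 - W)⁻¹ = (1 - W)⁻¹ * W := by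
      rw [mul_assoc, mul_assoc, hinv, mul_one]
    rw [← h2, show (1 - W) * W = W * (1 - W) by noncomm_ring, h3]
  have hc1 : (1 + W) * (1 - W)⁻¹ = (1 - W)⁻¹ * (1 + W) := by
    rw [add_mul, mul_add, one_mul, mul_one, hc]
  have hskew : ((1 - W)⁻¹ * (1 + W))ᴴ = -((1 - W)⁻¹ * (1 + W)) := by
    have e2 : (1 - Wᴴ)⁻¹ = -((1 - W)⁻¹ * W) := by
      apply Matrix.inv_eq_right_inv
      have e1 : 1 - Wᴴ = -(Wᴴ * (1 - W)) := by rw [mul_sub, mul_one, hW]; abel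
      rw [e1, neg_mul_neg, mul_assoc, ← mul_assoc (1 - W), hinv, one_mul, hW]
    rw [conjTranspose_mul, Matrix.conjTranspose_nonsing_inv, conjTranspose_sub,
      conjTranspose_add, conjTranspose_one, e2, mul_neg, ← neg_mul]
    rw [neg_mul, neg_inj, ← hc, ← mul_assoc, add_mul, one_mul, hW, add_comm W 1, hc1]
  constructor
  · show _ᴴ = _
    rw [Matrix.conjTranspose_smul, hskew, Complex.star_def, Complex.conj_I, neg_smul, smul_neg,
      neg_neg]
  · have hgsub : Complex.I • ((1 - W)⁻¹ * (1 + W)) - Complex.I • 1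
        = (Complex.I * 2) • ((1 - W)⁻¹ * W) := by
      rw [← smul_sub, mul_smul]
      congr 1
      have e : (1 - W)⁻¹ * (1 + W) - 1 = (1 - W)⁻¹ * ((1 + W) - (1 - W)) := by
        rw [mul_sub, hinv']
      rw [e, show (1 + W) - (1 - W) = (2:ℂ) • W by rw [two_smul]; abel, Matrix.mul_smul]
    have hgadd : Complex.I • ((1 - W)⁻¹ * (1 + W)) + Complex.I • 1
        = (Complex.I * 2) • (1 - W)⁻¹ := by
      rw [← smul_add, mul_smul]
      congr 1
      have e : (1 - W)⁻¹ * (1 + W) + 1 = (1 - W)⁻¹ * ((1 + W) + (1 - W)) := by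
        conv_rhs => rw [mul_add, hinv']
      rw [e, show (1 + W) + (1 - W) = (2:ℂ) • (1 : Matrix n n ℂ) by rw [two_smul]; abel,
        Matrix.mul_smul, mul_one]
    have hne : (Complex.I * 2) ≠ 0 := by simp [Complex.I_ne_zero]
    have hainv : ((Complex.I * 2) • (1 - W)⁻¹)⁻¹ = (Complex.I * 2)⁻¹ • (1 - W) := by
      apply Matrix.inv_eq_right_inv
      rw [smul_mul_assoc, mul_smul_comm, smul_smul, mul_inv_cancel₀ hne, one_smul, hinv']
    rw [cayley, hgsub, hgadd, hainv, smul_mul_assoc, mul_smul_comm, smul_smul,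
      mul_inv_cancel₀ hne, one_smul, ← hc, mul_assoc, hinv', mul_one]

end CayleyAux

theorem stmt_9 {m n : ℕ} (A : Matrix (Fin m) (Fin m) ℂ) (B : Matrix (Fin n) (Fin n) ℂ)
    (hA : A.IsHermitian) (hB : B.IsHermitian)
    (h1 : (1 : ℂ) ∉ spectrum ℂ (cayley A ⊗ₖ cayley B)) :
    (Complex.I • ((((cayley A)ᴴ ⊗ₖ (1 : Matrix (Fin n) (Fin n) ℂ)
        - (1 : Matrix (Fin m) (Fin m) ℂ) ⊗ₖ cayley B))⁻¹ *
      ((cayley A)ᴴ ⊗ₖ (1 : Matrix (Fin n) (Fin n) ℂ)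
        + (1 : Matrix (Fin m) (Fin m) ℂ) ⊗ₖ cayley B))).IsHermitian ∧
    cayley (Complex.I • ((((cayley A)ᴴ ⊗ₖ (1 : Matrix (Fin n) (Fin n) ℂ)
        - (1 : Matrix (Fin m) (Fin m) ℂ) ⊗ₖ cayley B))⁻¹ *
      ((cayley A)ᴴ ⊗ₖ (1 : Matrix (Fin n) (Fin n) ℂ)
        + (1 : Matrix (Fin m) (Fin m) ℂ) ⊗ₖ cayley B)))
      = cayley A ⊗ₖ cayley B := by
  set U := cayley A with hU
  set V := cayley B with hV
  set W := U ⊗ₖ V with hWdef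
  have hUU : Uᴴ * U = 1 := CayleyAux.cayley_conjTranspose_mul_self hA
  have hVV : Vᴴ * V = 1 := CayleyAux.cayley_conjTranspose_mul_self hB
  have hUU' : U * Uᴴ = 1 := mul_eq_one_comm.mp hUU
  have hWW : Wᴴ * W = 1 := by
    rw [hWdef, CayleyAux.kronecker_conjTranspose, ← Matrix.mul_kronecker_mul, hUU, hVV,
      Matrix.one_kronecker_one]
  have h1' : IsUnit (1 - W) := by
    have := spectrum.notMem_iff.mp h1
    rwa [_root_.map_one] at this
  -- rewrite D⁻¹ * S
  have hUk : (Uᴴ ⊗ₖ (1 : Matrix (Fin n) (Fin n) ℂ)) * (U ⊗ₖ 1) = 1 := by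
    rw [← Matrix.mul_kronecker_mul, hUU, mul_one, Matrix.one_kronecker_one]
  have hD : Uᴴ ⊗ₖ (1 : Matrix (Fin n) (Fin n) ℂ) - (1 : Matrix (Fin m) (Fin m) ℂ) ⊗ₖ V
      = (Uᴴ ⊗ₖ 1) * (1 - W) := by
    rw [mul_sub, mul_one, hWdef, ← Matrix.mul_kronecker_mul, hUU, one_mul]
  have hrw : ((Uᴴ ⊗ₖ (1 : Matrix (Fin n) (Fin n) ℂ)
        - (1 : Matrix (Fin m) (Fin m) ℂ) ⊗ₖ V))⁻¹ *
      (Uᴴ ⊗ₖ (1 : Matrix (Fin n) (Fin n) ℂ) + (1 : Matrix (Fin m) (Fin m) ℂ) ⊗ₖ V)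
      = (1 - W)⁻¹ * (1 + W) := by
    rw [hD, Matrix.mul_inv_rev, Matrix.inv_eq_right_inv hUk, mul_assoc]
    congr 1
    rw [mul_add, ← Matrix.mul_kronecker_mul, hUU', mul_one, Matrix.one_kronecker_one,
      hWdef, ← Matrix.mul_kronecker_mul, one_mul, mul_one]
  rw [hrw]
  exact CayleyAux.main hWW h1'
end

section
/- Let A ∈ M_m(ℂ) and B ∈ M_n(ℂ) be Hermitian such that 1 is not an eigenvalue of U_A ⊗ U_B. If H ∈ M_{mn}(ℂ) is Hermitian and U_H = U_A ⊗ U_B, then H = i(U_A* ⊗ I_n - I_m ⊗ U_B)^{-1}(U_A* ⊗ I_n + I_m ⊗ U_B); in particular H is uniquely determined. -/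
/-!
The Cayley transform can be inverted: `U = (H - i)(H + i)⁻¹` gives `(1 - U) H = i (1 + U)`, so
`H = i (1 - U)⁻¹ (1 + U)` as soon as `1 - U` is invertible. For `U = U_A ⊗ U_B`, multiplying
numerator and denominator on the left by `U_A* ⊗ I`, which is invertible because `U_A` is
unitary, turns `1 ∓ U` into `U_A* ⊗ I ∓ I ⊗ U_B`.
-/

open Matrix Kronecker Complex

section Cayley

variable {ι : Type*} [Fintype ι] [DecidableEq ι] {M : Matrix ι ι ℂ}

lemma Matrix.IsHermitian.isUnit_sub_smul_one (hM : M.IsHermitian) {z : ℂ} (hz : z.im ≠ 0) :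
    IsUnit (M - z • 1) := by
  have hz : z ∉ spectrum ℂ M := by
    rw [hM.spectrum_eq_image_range]
    rintro ⟨x, -, rfl⟩
    exact hz (ofReal_im x)
  rw [spectrum.notMem_iff, Algebra.algebraMap_eq_smul_one] at hz
  simpa using hz.neg

lemma Matrix.IsHermitian.isUnit_add_I_smul_one (hM : M.IsHermitian) : IsUnit (M + I • 1) := by
  simpa using hM.isUnit_sub_smul_one (z := -I) (by simp)

lemma Matrix.IsHermitian.isUnit_sub_I_smul_one (hM : M.IsHermitian) : IsUnit (M - I • 1) :=
  hM.isUnit_sub_smul_one (by simp)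

lemma cayley_mul_add_I_smul_one (hM : IsUnit (M + I • 1)) :
    cayley M * (M + I • 1) = M - I • 1 := by
  rw [cayley, nonsing_inv_mul_cancel_right _ _ ((isUnit_iff_isUnit_det _).mp hM)]

lemma eq_I_smul_inv_mul_of_isUnit_one_sub_cayley (hM : IsUnit (M + I • 1))
    (h1 : IsUnit (1 - cayley M)) :
    M = I • ((1 - cayley M)⁻¹ * (1 + cayley M)) := by
  have hC := cayley_mul_add_I_smul_one hM
  rw [mul_add, Matrix.mul_smul, mul_one] at hC
  have hlin : (1 - cayley M) * M = I • (1 + cayley M) := calc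
    (1 - cayley M) * M = (M - I • 1) - cayley M * M + I • 1 := by rw [sub_mul, one_mul]; abel
    _ = (cayley M * M + I • cayley M) - cayley M * M + I • 1 := by rw [hC]
    _ = I • (1 + cayley M) := by rw [smul_add]; abel
  rw [← Matrix.mul_smul, ← hlin,
    nonsing_inv_mul_cancel_left _ _ ((isUnit_iff_isUnit_det _).mp h1)]

lemma Matrix.IsHermitian.conjTranspose_cayley (hM : M.IsHermitian) :
    (cayley M)ᴴ = (M - I • 1)⁻¹ * (M + I • 1) := by
  simp [cayley, conjTranspose_nonsing_inv, hM.eq, sub_eq_add_neg]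

lemma Matrix.IsHermitian.conjTranspose_cayley_mul_cayley (hM : M.IsHermitian) :
    (cayley M)ᴴ * cayley M = 1 := by
  have hcomm : (M + I • 1) * (M - I • 1) = (M - I • 1) * (M + I • 1) := by
    simp only [mul_sub, sub_mul, mul_add, add_mul, Matrix.mul_smul, Matrix.smul_mul, one_mul,
      mul_one]
    abel
  rw [hM.conjTranspose_cayley, cayley, mul_assoc, ← mul_assoc (M + I • 1), hcomm, mul_assoc,
    mul_nonsing_inv _ ((isUnit_iff_isUnit_det _).mp hM.isUnit_add_I_smul_one), mul_one,
    nonsing_inv_mul _ ((isUnit_iff_isUnit_det _).mp hM.isUnit_sub_I_smul_one)]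

end Cayley

theorem stmt_11_general {m n : ℕ} (A : Matrix (Fin m) (Fin m) ℂ) (B : Matrix (Fin n) (Fin n) ℂ)
    (hA : A.IsHermitian)
    (h1 : (1 : ℂ) ∉ spectrum ℂ (cayley A ⊗ₖ cayley B))
    (H : Matrix (Fin m × Fin n) (Fin m × Fin n) ℂ) (hH : H.IsHermitian)
    (hU : cayley H = cayley A ⊗ₖ cayley B) :
    H = Complex.I • ((((cayley A)ᴴ ⊗ₖ (1 : Matrix (Fin n) (Fin n) ℂ)
        - (1 : Matrix (Fin m) (Fin m) ℂ) ⊗ₖ cayley B))⁻¹ *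
      ((cayley A)ᴴ ⊗ₖ (1 : Matrix (Fin n) (Fin n) ℂ)
        + (1 : Matrix (Fin m) (Fin m) ℂ) ⊗ₖ cayley B)) := by
  have hUA := hA.conjTranspose_cayley_mul_cayley
  have hV : (cayley A)ᴴ ⊗ₖ (1 : Matrix (Fin n) (Fin n) ℂ) * (cayley A ⊗ₖ cayley B)
      = 1 ⊗ₖ cayley B := by
    rw [← mul_kronecker_mul, hUA, one_mul]
  have hVdet : IsUnit ((cayley A)ᴴ ⊗ₖ (1 : Matrix (Fin n) (Fin n) ℂ)).det :=
    isUnit_det_of_right_inverse (B := cayley A ⊗ₖ 1)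
      (by rw [← mul_kronecker_mul, hUA, one_mul, one_kronecker_one])
  have h1U : IsUnit (1 - cayley H) := by
    simpa [hU] using spectrum.notMem_iff.mp h1
  rw [← hV, ← mul_one_sub, ← mul_one_add, Matrix.mul_inv_rev, mul_assoc,
    nonsing_inv_mul_cancel_left _ _ hVdet, ← hU]
  exact eq_I_smul_inv_mul_of_isUnit_one_sub_cayley hH.isUnit_add_I_smul_one h1U

theorem stmt_11 {m n : ℕ} (A : Matrix (Fin m) (Fin m) ℂ) (B : Matrix (Fin n) (Fin n) ℂ)
    (hA : A.IsHermitian) (hB : B.IsHermitian)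
    (h1 : (1 : ℂ) ∉ spectrum ℂ (cayley A ⊗ₖ cayley B))
    (H : Matrix (Fin m × Fin n) (Fin m × Fin n) ℂ) (hH : H.IsHermitian)
    (hU : cayley H = cayley A ⊗ₖ cayley B) :
    H = Complex.I • ((((cayley A)ᴴ ⊗ₖ (1 : Matrix (Fin n) (Fin n) ℂ)
        - (1 : Matrix (Fin m) (Fin m) ℂ) ⊗ₖ cayley B))⁻¹ *
      ((cayley A)ᴴ ⊗ₖ (1 : Matrix (Fin n) (Fin n) ℂ)
        + (1 : Matrix (Fin m) (Fin m) ℂ) ⊗ₖ cayley B)) :=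
  stmt_11_general A B hA h1 H hH hU
end

section
/- Let real numbers a_p, a_r, b_q, b_s be given. Then ((a_p b_q - i)/(a_p b_q + i))·((a_r b_s - i)/(a_r b_s + i)) = ((a_p b_s - i)/(a_p b_s + i))·((a_r b_q - i)/(a_r b_q + i)) if and only if (a_p - a_r)(b_q - b_s)(a_p a_r b_q b_s - 1) = 0. -/
open Matrix Kronecker Complex

theorem stmt_13 (ap ar bq bs : ℝ) :
    (((ap * bq : ℂ) - Complex.I) / ((ap * bq : ℂ) + Complex.I)) *
        (((ar * bs : ℂ) - Complex.I) / ((ar * bs : ℂ) + Complex.I)) =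
      (((ap * bs : ℂ) - Complex.I) / ((ap * bs : ℂ) + Complex.I)) *
        (((ar * bq : ℂ) - Complex.I) / ((ar * bq : ℂ) + Complex.I)) ↔
    (ap - ar) * (bq - bs) * (ap * ar * bq * bs - 1) = 0 := by
  have hne : ∀ x y : ℝ, ((x : ℂ) * y + Complex.I) ≠ 0 := by
    intro x y h
    have := congrArg Complex.im h
    simp at this
  rw [div_mul_div_comm, div_mul_div_comm, div_eq_div_iff (mul_ne_zero (hne _ _) (hne _ _)) (mul_ne_zero (hne _ _) (hne _ _))]
  constructor
  · intro h
    have h1 := congrArg Complex.im h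
    simp only [Complex.ext_iff] at h
    obtain ⟨hre, him⟩ := h
    simp [Complex.mul_im, Complex.mul_re, Complex.add_re, Complex.add_im, Complex.sub_re, Complex.sub_im] at hre him
    nlinarith [him]
  · intro h
    have h' : (((ap:ℂ) - ar) * (bq - bs) * (ap * ar * bq * bs - 1) = 0) := by
      exact_mod_cast congrArg (Complex.ofReal) h
    rw [Complex.ext_iff]
    constructor <;>
      simp [Complex.mul_im, Complex.mul_re, Complex.add_re, Complex.add_im,
        Complex.sub_re, Complex.sub_im] <;> nlinarith [h, sq_nonneg (ap*bq), sq_nonneg (ar*bs)]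
end

section
/- Let A ∈ M_m(ℂ) and B ∈ M_n(ℂ) be Hermitian. The Cayley transform U_{A⊗B} can be written as C ⊗ D for some C ∈ M_m(ℂ), D ∈ M_n(ℂ) if and only if one of the following holds: (a) A has exactly one eigenvalue; (b) B has exactly one eigenvalue; (c) A has exactly two eigenvalues a₁, a₂ and B has exactly two eigenvalues b₁, b₂ with a₁a₂b₁b₂ = 1. -/
open Matrix Kronecker Complex

/-!
Diagonalising `A = U diag(α) U*` and `B = V diag(β) V*` writes `A ⊗ B` as the conjugate of
`diag(α i * β j)` by the unitary `U ⊗ V`. The Cayley transform commutes with this conjugation,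
and conjugation by `U ⊗ V` preserves Kronecker products, so `U_{A ⊗ B}` is a Kronecker product
iff the diagonal matrix with entries `f(α i * β j)`, `f t = (t - i) / (t + i)`, is one, i.e. iff
these nonzero numbers have the form `c i * d j`, i.e. iff all their `2 × 2` minors vanish.
A direct computation shows `f(ab) f(a'b') = f(ab') f(a'b) ↔ (a a' b b' - 1)(a - a')(b - b') = 0`,
and this holds for all eigenvalues exactly in the three cases of the statement: if both spectra
have two distinct points, every other eigenvalue is forced by `a₁ a₂ b₁ b₂ = 1` to be one of them.
-/

noncomputable def cayleyScalar (t : ℝ) : ℂ := (t - I) / (t + I)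

lemma ofReal_add_I_ne_zero (t : ℝ) : (t : ℂ) + I ≠ 0 := by
  simp [Complex.ext_iff]

lemma ofReal_sub_I_ne_zero (t : ℝ) : (t : ℂ) - I ≠ 0 := by
  simp [Complex.ext_iff]

lemma cayleyScalar_ne_zero (t : ℝ) : cayleyScalar t ≠ 0 :=
  div_ne_zero (ofReal_sub_I_ne_zero t) (ofReal_add_I_ne_zero t)

lemma cayleyScalar_mul_eq_iff (a a' b b' : ℝ) :
    cayleyScalar (a * b) * cayleyScalar (a' * b') = cayleyScalar (a * b') * cayleyScalar (a' * b) ↔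
      (a * a' * b * b' - 1) * (a - a') * (b - b') = 0 := by
  simp only [cayleyScalar, div_mul_div_comm]
  rw [div_eq_div_iff (mul_ne_zero (ofReal_add_I_ne_zero _) (ofReal_add_I_ne_zero _))
    (mul_ne_zero (ofReal_add_I_ne_zero _) (ofReal_add_I_ne_zero _)), ← sub_eq_zero]
  -- the difference of the two sides is odd in `I`, hence `I` times a real number
  have hdiff : ((a * b : ℝ) - I) * ((a' * b' : ℝ) - I) * (((a * b' : ℝ) + I) * ((a' * b : ℝ) + I))
      - ((a * b' : ℝ) - I) * ((a' * b : ℝ) - I) * (((a * b : ℝ) + I) * ((a' * b' : ℝ) + I))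
      = -2 * I * ((a * a' * b * b' - 1) * (a - a') * (b - b') : ℝ) := by
    push_cast
    linear_combination (2 * (a * b' + a' * b - a * b - a' * b') * I) * I_sq
  rw [hdiff, mul_eq_zero, ofReal_eq_zero]
  simp [I_ne_zero]

theorem Matrix.map_nonsing_inv {m n R F : Type*} [Fintype m] [DecidableEq m] [Fintype n]
    [DecidableEq n] [CommRing R] [EquivLike F (Matrix m m R) (Matrix n n R)]
    [RingEquivClass F (Matrix m m R) (Matrix n n R)] (φ : F) (M : Matrix m m R) :
    φ M⁻¹ = (φ M)⁻¹ := by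
  by_cases hM : IsUnit M
  · refine (inv_eq_left_inv ?_).symm
    rw [← map_mul, nonsing_inv_mul _ ((isUnit_iff_isUnit_det M).mp hM), map_one]
  · have hφM : ¬IsUnit (φ M) := by rwa [isUnit_map_iff]
    rw [nonsing_inv_eq_ringInverse, nonsing_inv_eq_ringInverse, Ring.inverse_non_unit _ hM,
      Ring.inverse_non_unit _ hφM, map_zero]

theorem map_cayley {m n F : Type*} [Fintype m] [DecidableEq m] [Fintype n] [DecidableEq n]
    [EquivLike F (Matrix m m ℂ) (Matrix n n ℂ)] [AlgEquivClass F ℂ (Matrix m m ℂ) (Matrix n n ℂ)]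
    (φ : F) (M : Matrix m m ℂ) :
    φ (cayley M) = cayley (φ M) := by
  simp only [cayley, map_mul, map_sub, map_add, map_smul, map_one, map_nonsing_inv]

theorem cayley_diagonal {n : Type*} [Fintype n] [DecidableEq n] (r : n → ℝ) :
    cayley (diagonal fun i => (r i : ℂ)) = diagonal fun i => cayleyScalar (r i) := by
  have hinv : (diagonal fun i => (r i : ℂ) + I)⁻¹ = diagonal fun i => ((r i : ℂ) + I)⁻¹ := by
    refine inv_eq_left_inv ?_
    simp [diagonal_mul_diagonal, inv_mul_cancel₀ (ofReal_add_I_ne_zero _)]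
  rw [cayley, smul_one_eq_diagonal, diagonal_sub, diagonal_add]
  simp only [hinv, diagonal_mul_diagonal]
  rfl

section Kronecker

variable {m n R : Type*} [Fintype m] [DecidableEq m] [Fintype n] [DecidableEq n]
  [CommRing R] [StarRing R]

def Matrix.kroneckerUnitary (u : unitary (Matrix m m R)) (v : unitary (Matrix n n R)) :
    unitary (Matrix (m × n) (m × n) R) :=
  ⟨u ⊗ₖ v, kronecker_mem_unitary u.2 v.2⟩

theorem Matrix.star_kroneckerUnitary (u : unitary (Matrix m m R)) (v : unitary (Matrix n n R)) :
    star (kroneckerUnitary u v) = kroneckerUnitary (star u) (star v) :=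
  Subtype.ext (conjTranspose_kronecker (u : Matrix m m R) (v : Matrix n n R))

theorem Matrix.conjStarAlgAut_kroneckerUnitary (u : unitary (Matrix m m R))
    (v : unitary (Matrix n n R)) (C : Matrix m m R) (D : Matrix n n R) :
    Unitary.conjStarAlgAut R (Matrix (m × n) (m × n) R) (kroneckerUnitary u v) (C ⊗ₖ D) =
      Unitary.conjStarAlgAut R (Matrix m m R) u C ⊗ₖ
        Unitary.conjStarAlgAut R (Matrix n n R) v D := by
  simp [kroneckerUnitary, mul_kronecker_mul, star_eq_conjTranspose, conjTranspose_kronecker]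

theorem Matrix.exists_conjStarAlgAut_kroneckerUnitary_eq_kronecker_iff
    (u : unitary (Matrix m m R)) (v : unitary (Matrix n n R)) (X : Matrix (m × n) (m × n) R) :
    (∃ (C : Matrix m m R) (D : Matrix n n R),
        Unitary.conjStarAlgAut R (Matrix (m × n) (m × n) R) (kroneckerUnitary u v) X = C ⊗ₖ D) ↔
      ∃ (C : Matrix m m R) (D : Matrix n n R), X = C ⊗ₖ D := by
  constructor
  · rintro ⟨C, D, h⟩
    refine ⟨Unitary.conjStarAlgAut R (Matrix m m R) (star u) C,
      Unitary.conjStarAlgAut R (Matrix n n R) (star v) D, ?_⟩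
    rw [← conjStarAlgAut_kroneckerUnitary, ← star_kroneckerUnitary, ← h,
      ← Unitary.conjStarAlgAut_symm, StarAlgEquiv.symm_apply_apply]
  · rintro ⟨C, D, rfl⟩
    exact ⟨_, _, conjStarAlgAut_kroneckerUnitary u v C D⟩

end Kronecker

theorem Matrix.exists_diagonal_eq_kronecker_iff {m n R : Type*} [DecidableEq m] [DecidableEq n]
    [MulZeroClass R] (w : m × n → R) :
    (∃ (C : Matrix m m R) (D : Matrix n n R), diagonal w = C ⊗ₖ D) ↔
      ∃ (c : m → R) (d : n → R), ∀ i j, w (i, j) = c i * d j := by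
  constructor
  · rintro ⟨C, D, h⟩
    exact ⟨fun i => C i i, fun j => D j j, fun i j => by
      simpa using congr_fun₂ h (i, j) (i, j)⟩
  · rintro ⟨c, d, h⟩
    refine ⟨diagonal c, diagonal d, ?_⟩
    rw [diagonal_kronecker_diagonal]
    exact congr_arg diagonal (funext fun p => h p.1 p.2)

theorem exists_eq_mul_iff_forall_minor_eq {ι κ K : Type*} [CommGroupWithZero K] [Nonempty ι]
    [Nonempty κ] (w : ι → κ → K) (hw : ∀ i j, w i j ≠ 0) :
    (∃ (c : ι → K) (d : κ → K), ∀ i j, w i j = c i * d j) ↔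
      ∀ i i' j j', w i j * w i' j' = w i j' * w i' j := by
  constructor
  · rintro ⟨c, d, h⟩ i i' j j'
    simp only [h]
    ac_rfl
  · intro h
    obtain ⟨i₀⟩ := ‹Nonempty ι›
    obtain ⟨j₀⟩ := ‹Nonempty κ›
    refine ⟨fun i => w i j₀, fun j => w i₀ j / w i₀ j₀, fun i j => ?_⟩
    rw [mul_div_assoc', eq_div_iff (hw i₀ j₀), h]

def CayleyCompatible (S T : Set ℝ) : Prop :=
  ∀ x ∈ S, ∀ x' ∈ S, ∀ y ∈ T, ∀ y' ∈ T, (x * x' * y * y' - 1) * (x - x') * (y - y') = 0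

namespace CayleyCompatible

variable {S T : Set ℝ}

theorem symm (h : CayleyCompatible S T) : CayleyCompatible T S :=
  fun y hy y' hy' x hx x' hx' => by linear_combination h x hx x' hx' y hy y' hy'

theorem mul_eq_one (h : CayleyCompatible S T) {a₁ a₂ b₁ b₂ : ℝ} (ha₁ : a₁ ∈ S) (ha₂ : a₂ ∈ S)
    (ha : a₁ ≠ a₂) (hb₁ : b₁ ∈ T) (hb₂ : b₂ ∈ T) (hb : b₁ ≠ b₂) : a₁ * a₂ * b₁ * b₂ = 1 := by
  have := h a₁ ha₁ a₂ ha₂ b₁ hb₁ b₂ hb₂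
  rw [mul_eq_zero, mul_eq_zero, sub_eq_zero, sub_eq_zero, sub_eq_zero] at this
  tauto

theorem subset_pair (h : CayleyCompatible S T) {a₁ a₂ b₁ b₂ : ℝ} (ha₁ : a₁ ∈ S) (ha₂ : a₂ ∈ S)
    (ha : a₁ ≠ a₂) (hb₁ : b₁ ∈ T) (hb₂ : b₂ ∈ T) (hb : b₁ ≠ b₂) : S ⊆ {a₁, a₂} := by
  intro x hx
  by_cases hx₂ : x = a₂
  · exact Or.inr hx₂
  have h₁ := h.mul_eq_one ha₁ ha₂ ha hb₁ hb₂ hb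
  have hx₁ := h.mul_eq_one hx ha₂ hx₂ hb₁ hb₂ hb
  have hne : a₂ * b₁ * b₂ ≠ 0 := right_ne_zero_of_mul_eq_one (a := a₁) (by linear_combination h₁)
  exact Or.inl (mul_right_cancel₀ hne (by linear_combination hx₁ - h₁))

end CayleyCompatible

theorem cayleyCompatible_iff {S T : Set ℝ} (hS : S.Nonempty) (hT : T.Nonempty) :
    CayleyCompatible S T ↔
      (∃ a, S = {a}) ∨ (∃ b, T = {b}) ∨
        ∃ a₁ a₂ b₁ b₂ : ℝ, a₁ ≠ a₂ ∧ b₁ ≠ b₂ ∧ S = {a₁, a₂} ∧ T = {b₁, b₂} ∧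
          a₁ * a₂ * b₁ * b₂ = 1 := by
  constructor
  · intro h
    obtain ⟨a, ha⟩ := hS
    obtain ⟨b, hb⟩ := hT
    by_cases hSs : S.Subsingleton
    · exact Or.inl ⟨a, hSs.eq_singleton_of_mem ha⟩
    by_cases hTs : T.Subsingleton
    · exact Or.inr (Or.inl ⟨b, hTs.eq_singleton_of_mem hb⟩)
    obtain ⟨a₁, ha₁, a₂, ha₂, ha⟩ := Set.not_subsingleton_iff.mp hSs
    obtain ⟨b₁, hb₁, b₂, hb₂, hb⟩ := Set.not_subsingleton_iff.mp hTs
    refine Or.inr (Or.inr ⟨a₁, a₂, b₁, b₂, ha, hb, ?_, ?_, h.mul_eq_one ha₁ ha₂ ha hb₁ hb₂ hb⟩)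
    · exact (h.subset_pair ha₁ ha₂ ha hb₁ hb₂ hb).antisymm (Set.pair_subset ha₁ ha₂)
    · exact (h.symm.subset_pair hb₁ hb₂ hb ha₁ ha₂ ha).antisymm (Set.pair_subset hb₁ hb₂)
  · rintro (⟨a, rfl⟩ | ⟨b, rfl⟩ | ⟨a₁, a₂, b₁, b₂, -, -, rfl, rfl, h⟩) x hx x' hx' y hy y' hy'
    · rw [Set.eq_of_mem_singleton hx, Set.eq_of_mem_singleton hx']
      ring
    · rw [Set.eq_of_mem_singleton hy, Set.eq_of_mem_singleton hy']
      ring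
    · simp only [Set.mem_insert_iff, Set.mem_singleton_iff] at hx hx' hy hy'
      rcases hx with rfl | rfl <;> rcases hx' with rfl | rfl <;>
        rcases hy with rfl | rfl <;> rcases hy' with rfl | rfl <;>
        first
          | ring1
          | linear_combination (x - x') * (y - y') * h

namespace Matrix.IsHermitian

variable {m n : Type*} [Fintype m] [DecidableEq m] [Fintype n] [DecidableEq n]
  {A : Matrix m m ℂ} {B : Matrix n n ℂ}

theorem cayley_kronecker (hA : A.IsHermitian) (hB : B.IsHermitian) :
    cayley (A ⊗ₖ B) =
      Unitary.conjStarAlgAut ℂ (Matrix (m × n) (m × n) ℂ)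
        (kroneckerUnitary hA.eigenvectorUnitary hB.eigenvectorUnitary)
        (diagonal fun p => cayleyScalar (hA.eigenvalues p.1 * hB.eigenvalues p.2)) := by
  conv_lhs => rw [hA.spectral_theorem, hB.spectral_theorem]
  rw [← conjStarAlgAut_kroneckerUnitary, ← map_cayley, diagonal_kronecker_diagonal]
  have hdiag : (fun p : m × n => (RCLike.ofReal ∘ hA.eigenvalues) p.1 *
      (RCLike.ofReal ∘ hB.eigenvalues) p.2) =
        fun p => ((hA.eigenvalues p.1 * hB.eigenvalues p.2 : ℝ) : ℂ) := by
    ext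
    simp
  rw [hdiag, cayley_diagonal]

theorem exists_cayley_kronecker_eq_iff [Nonempty m] [Nonempty n] (hA : A.IsHermitian)
    (hB : B.IsHermitian) :
    (∃ (C : Matrix m m ℂ) (D : Matrix n n ℂ), cayley (A ⊗ₖ B) = C ⊗ₖ D) ↔
      CayleyCompatible (spectrum ℝ A) (spectrum ℝ B) := by
  rw [hA.cayley_kronecker hB, exists_conjStarAlgAut_kroneckerUnitary_eq_kronecker_iff,
    exists_diagonal_eq_kronecker_iff,
    exists_eq_mul_iff_forall_minor_eq
      (fun i j => cayleyScalar (hA.eigenvalues i * hB.eigenvalues j))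
      fun _ _ => cayleyScalar_ne_zero _]
  simp only [cayleyScalar_mul_eq_iff, CayleyCompatible, hA.spectrum_real_eq_range_eigenvalues,
    hB.spectrum_real_eq_range_eigenvalues, Set.forall_mem_range]

end Matrix.IsHermitian

theorem stmt_14 {m n : ℕ} (hm : 0 < m) (hn : 0 < n)
    (A : Matrix (Fin m) (Fin m) ℂ) (B : Matrix (Fin n) (Fin n) ℂ)
    (hA : A.IsHermitian) (hB : B.IsHermitian) :
    (∃ (C : Matrix (Fin m) (Fin m) ℂ) (D : Matrix (Fin n) (Fin n) ℂ),
        cayley (A ⊗ₖ B) = C ⊗ₖ D) ↔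
      (∃ a : ℝ, spectrum ℝ A = {a}) ∨
      (∃ b : ℝ, spectrum ℝ B = {b}) ∨
      (∃ a₁ a₂ b₁ b₂ : ℝ, a₁ ≠ a₂ ∧ b₁ ≠ b₂ ∧
        spectrum ℝ A = {a₁, a₂} ∧ spectrum ℝ B = {b₁, b₂} ∧
        a₁ * a₂ * b₁ * b₂ = 1) := by
  have : Nonempty (Fin m) := Fin.pos_iff_nonempty.mp hm
  have : Nonempty (Fin n) := Fin.pos_iff_nonempty.mp hn
  rw [hA.exists_cayley_kronecker_eq_iff hB, cayleyCompatible_iff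
    (hA.spectrum_real_eq_range_eigenvalues ▸ Set.range_nonempty _)
    (hB.spectrum_real_eq_range_eigenvalues ▸ Set.range_nonempty _)]
end

section
/- Let A ∈ M_m(ℂ) and B ∈ M_n(ℂ) be Hermitian and suppose U_{A⊗B} = C' ⊗ D' for some matrices C' ∈ M_m(ℂ), D' ∈ M_n(ℂ). Then there exist Hermitian matrices C ∈ M_m(ℂ) and D ∈ M_n(ℂ) with U_{A⊗B} = U_C ⊗ U_D. -/
/-!
Since `A ⊗ B` is Hermitian, `C' ⊗ D' = U_{A⊗B}` is unitary. Then `C'ᴴC' ⊗ D'ᴴD' = 1` forces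
`C'ᴴC' = c • 1` and `D'ᴴD' = c⁻¹ • 1` with `c > 0`, so `s • C'` and `s⁻¹ • D'` are unitary for
`s = c^(-1/2)`. Rescaling further by `z` and `z⁻¹` with `|z| = 1` keeps both factors unitary, and
since a matrix has finitely many eigenvalues while the circle is infinite, `z` can be chosen so that
`1` is an eigenvalue of neither factor. A unitary `U` without eigenvalue `1` is the Cayley transform
of the Hermitian matrix `i (1 + U) (1 - U)⁻¹`.
-/

open Matrix Kronecker Complex

open scoped ComplexOrder

lemma Complex.sphere_zero_one_infinite : (Metric.sphere (0 : ℂ) 1).Infinite :=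
  (isPreconnected_sphere (by rw [rank_real_complex]; norm_num) 0 1).infinite_of_nontrivial
    ⟨1, by simp, -1, by simp, by norm_num⟩

namespace Matrix

section Kronecker

variable {l n : Type*}

lemma IsHermitian.kronecker {R : Type*} [CommSemiring R] [StarRing R] {M : Matrix l l R}
    {N : Matrix n n R} (hM : M.IsHermitian) (hN : N.IsHermitian) : (M ⊗ₖ N).IsHermitian := by
  rw [IsHermitian, conjTranspose_kronecker, hM.eq, hN.eq]

lemma smul_kronecker_inv_smul {K : Type*} [Field K] {a : K} (ha : a ≠ 0) (M : Matrix l l K)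
    (N : Matrix n n K) : (a • M) ⊗ₖ (a⁻¹ • N) = M ⊗ₖ N := by
  rw [smul_kronecker, kronecker_smul, smul_smul, mul_inv_cancel₀ ha, one_smul]

lemma exists_eq_smul_one_of_kronecker_eq_one {K : Type*} [Field K] [DecidableEq l]
    [DecidableEq n] [Nonempty l] [Nonempty n] {P : Matrix l l K} {Q : Matrix n n K}
    (h : P ⊗ₖ Q = 1) : ∃ c : K, c ≠ 0 ∧ P = c • 1 ∧ Q = c⁻¹ • 1 := by
  obtain ⟨i₀⟩ := ‹Nonempty l›
  obtain ⟨j₀⟩ := ‹Nonempty n›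
  have hPQ (i i' : l) (j j' : n) :
      P i i' * Q j j' = (1 : Matrix l l K) i i' * (1 : Matrix n n K) j j' := by
    simpa using congrFun (congrFun (h.trans one_kronecker_one.symm) (i, j)) (i', j')
  have hc : P i₀ i₀ * Q j₀ j₀ = 1 := by simpa using hPQ i₀ i₀ j₀ j₀
  have hc₀ : P i₀ i₀ ≠ 0 := left_ne_zero_of_mul_eq_one hc
  refine ⟨P i₀ i₀, hc₀, ?_, ?_⟩
  · ext i i'
    have hP := hPQ i i' j₀ j₀
    simp only [one_apply_eq, mul_one] at hP
    rw [smul_apply, smul_eq_mul]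
    linear_combination P i₀ i₀ * hP - P i i' * hc
  · ext j j'
    have hQ := hPQ i₀ i₀ j j'
    simp only [one_apply_eq, one_mul] at hQ
    rw [smul_apply, smul_eq_mul, eq_inv_mul_iff_mul_eq₀ hc₀, hQ]

end Kronecker

variable {k l n : Type*} [Fintype k] [DecidableEq k] [Fintype l] [DecidableEq l]
  [Fintype n] [DecidableEq n]

lemma conjTranspose_mul_nonsing_inv_mem_unitaryGroup {R : Type*} [Field R] [StarRing R]
    {X : Matrix k k R} (hX : IsUnit X) (hXn : X * Xᴴ = Xᴴ * X) :
    Xᴴ * X⁻¹ ∈ unitaryGroup k R := by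
  have hXd : IsUnit X.det := (isUnit_iff_isUnit_det X).mp hX
  have hXd' : IsUnit Xᴴ.det := by rw [det_conjTranspose]; exact hXd.star
  rw [mem_unitaryGroup_iff', star_eq_conjTranspose, conjTranspose_mul, conjTranspose_conjTranspose,
    Matrix.mul_assoc, ← Matrix.mul_assoc X, hXn, conjTranspose_nonsing_inv, Matrix.mul_assoc,
    nonsing_inv_mul_cancel_left _ _ hXd', mul_nonsing_inv _ hXd]

omit [Fintype k] in
lemma IsHermitian.conjTranspose_add_I_smul_one {M : Matrix k k ℂ} (hM : M.IsHermitian) :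
    (M + I • 1)ᴴ = M - I • 1 := by
  simp [hM.eq, sub_eq_add_neg]

lemma IsHermitian.isUnit_add_I_smul_one_s15 {M : Matrix k k ℂ} (hM : M.IsHermitian) :
    IsUnit (M + I • 1) := by
  have hpos : ((M + I • 1)ᴴ * (M + I • 1)).PosDef := by
    have hsq : (M + I • 1)ᴴ * (M + I • 1) = Mᴴ * M + 1 := by
      rw [hM.conjTranspose_add_I_smul_one, hM.eq]
      simp only [sub_mul, mul_add, mul_smul_comm, smul_mul_assoc, mul_one, one_mul]
      rw [smul_sub, smul_smul, I_mul_I]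
      module
    rw [hsq]
    exact PosDef.posSemidef_add (posSemidef_conjTranspose_mul_self M) PosDef.one
  exact isUnit_of_mul_isUnit_right hpos.isUnit

lemma IsHermitian.cayley_mem_unitaryGroup {M : Matrix k k ℂ} (hM : M.IsHermitian) :
    cayley M ∈ unitaryGroup k ℂ := by
  rw [cayley, ← hM.conjTranspose_add_I_smul_one]
  refine conjTranspose_mul_nonsing_inv_mem_unitaryGroup hM.isUnit_add_I_smul_one_s15 ?_
  rw [hM.conjTranspose_add_I_smul_one]
  simp only [sub_mul, mul_add, add_mul, mul_sub, mul_smul_comm, smul_mul_assoc, mul_one, one_mul]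
  module

lemma cayley_eq_of_sub_eq_mul {C U : Matrix k k ℂ} (hC : IsUnit (C + I • 1))
    (h : C - I • 1 = U * (C + I • 1)) : cayley C = U := by
  rw [cayley, h, mul_nonsing_inv_cancel_right _ _ ((isUnit_iff_isUnit_det _).mp hC)]

lemma exists_isHermitian_cayley_eq {U : Matrix k k ℂ} (hU : U ∈ unitaryGroup k ℂ)
    (h1 : IsUnit (1 - U)) : ∃ C : Matrix k k ℂ, C.IsHermitian ∧ cayley C = U := by
  rw [mem_unitaryGroup_iff', star_eq_conjTranspose] at hU
  set V := (1 - U)⁻¹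
  have hV : (1 - U) * V = 1 := mul_nonsing_inv _ ((isUnit_iff_isUnit_det _).mp h1)
  have hUV : U * V = V - 1 := by
    rw [← hV, sub_mul, one_mul]
    abel
  have hUHV : Uᴴ * V - V = Uᴴ :=
    calc Uᴴ * V - V = Uᴴ * ((1 - U) * V) := by
          rw [sub_mul, one_mul, mul_sub, ← Matrix.mul_assoc, hU, one_mul]
      _ = Uᴴ := by rw [hV, mul_one]
  have hVH : Vᴴ = 1 - V := by
    rw [conjTranspose_nonsing_inv, conjTranspose_sub, conjTranspose_one]
    refine inv_eq_right_inv ?_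
    calc (1 - Uᴴ) * (1 - V) = 1 - Uᴴ + (Uᴴ * V - V) := by noncomm_ring
      _ = 1 := by rw [hUHV, sub_add_cancel]
  -- `i (2V - 1) = i (1 + U) (1 - U)⁻¹`
  set C := I • ((2 : ℂ) • V - 1)
  have hC : C.IsHermitian := by
    rw [IsHermitian, conjTranspose_smul, conjTranspose_sub, conjTranspose_smul, hVH]
    simp only [star_def, conj_I, conj_ofNat, conjTranspose_one]
    module
  refine ⟨C, hC, cayley_eq_of_sub_eq_mul hC.isUnit_add_I_smul_one_s15 ?_⟩
  simp only [C, mul_add, mul_smul_comm, mul_sub, mul_one, hUV]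
  module

lemma exists_smul_mem_unitaryGroup_of_kronecker_mem [Nonempty l] [Nonempty n]
    {C : Matrix l l ℂ} {D : Matrix n n ℂ} (h : C ⊗ₖ D ∈ unitaryGroup (l × n) ℂ) :
    ∃ s : ℂ, s ≠ 0 ∧ s • C ∈ unitaryGroup l ℂ ∧ s⁻¹ • D ∈ unitaryGroup n ℂ := by
  rw [mem_unitaryGroup_iff', star_eq_conjTranspose, conjTranspose_kronecker,
    ← mul_kronecker_mul] at h
  obtain ⟨c, hc₀, hC, hD⟩ := exists_eq_smul_one_of_kronecker_eq_one h
  have hc : 0 < c := by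
    obtain ⟨i⟩ := ‹Nonempty l›
    have hdiag := (posSemidef_conjTranspose_mul_self C).diag_nonneg (i := i)
    rw [hC, smul_apply, one_apply_eq, smul_eq_mul, mul_one] at hdiag
    exact lt_of_le_of_ne hdiag hc₀.symm
  obtain ⟨t, ht₀, rfl⟩ : ∃ t : ℝ, t ≠ 0 ∧ ((t * t : ℝ) : ℂ) = c := by
    obtain ⟨hre, him⟩ := Complex.pos_iff.mp hc
    refine ⟨√c.re, (Real.sqrt_pos.mpr hre).ne', ?_⟩
    rw [Real.mul_self_sqrt hre.le]
    exact Complex.ext rfl him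
  have ht : (t : ℂ) ≠ 0 := ofReal_ne_zero.mpr ht₀
  refine ⟨(t : ℂ)⁻¹, inv_ne_zero ht, ?_, ?_⟩ <;>
  · rw [mem_unitaryGroup_iff', star_eq_conjTranspose, conjTranspose_smul, smul_mul_smul_comm]
    simp only [hC, hD, smul_smul, star_inv₀, inv_inv, star_def, conj_ofReal, ofReal_mul]
    field_simp
    exact one_smul _ _

lemma finite_setOf_not_isUnit_one_sub_smul {K : Type*} [Field K] (M : Matrix k k K) :
    {a : K | ¬IsUnit (1 - a • M)}.Finite := by
  refine (M.finite_spectrum.image (·⁻¹)).subset fun a ha => ?_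
  have ha₀ : a ≠ 0 := by
    rintro rfl
    simp at ha
  refine ⟨a⁻¹, spectrum.mem_iff.mpr fun hu => ha ?_, inv_inv a⟩
  have hfactor : 1 - a • M = algebraMap K _ a * (algebraMap K _ a⁻¹ - M) := by
    rw [mul_sub, ← map_mul, mul_inv_cancel₀ ha₀, map_one, Algebra.smul_def]
  rw [hfactor]
  exact ((isUnit_iff_ne_zero.mpr ha₀).map _).mul hu

lemma exists_norm_eq_one_isUnit_one_sub_smul (M : Matrix l l ℂ) (N : Matrix n n ℂ) :
    ∃ z : ℂ, ‖z‖ = 1 ∧ IsUnit (1 - z • M) ∧ IsUnit (1 - z⁻¹ • N) := by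
  have hbad : ({a : ℂ | ¬IsUnit (1 - a • M)} ∪ (·⁻¹) ⁻¹' {a | ¬IsUnit (1 - a • N)}).Finite :=
    (finite_setOf_not_isUnit_one_sub_smul M).union
      ((finite_setOf_not_isUnit_one_sub_smul N).preimage inv_injective.injOn)
  obtain ⟨z, hz, hz_good⟩ := (Complex.sphere_zero_one_infinite.sdiff hbad).nonempty
  simp only [Set.mem_union, Set.mem_ofPred_eq, Set.mem_preimage, not_or, not_not] at hz_good
  exact ⟨z, mem_sphere_zero_iff_norm.mp hz, hz_good⟩

lemma smul_mem_unitaryGroup_of_norm_eq_one {z : ℂ} (hz : ‖z‖ = 1) {U : Matrix k k ℂ}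
    (hU : U ∈ unitaryGroup k ℂ) : z • U ∈ unitaryGroup k ℂ := by
  refine Unitary.smul_mem_of_mem (Unitary.mem_iff_star_mul_self.mpr ?_) hU
  rw [star_def, conj_mul', hz]
  norm_num

lemma exists_isHermitian_cayley_kronecker_cayley_eq [Nonempty l] [Nonempty n]
    {C' : Matrix l l ℂ} {D' : Matrix n n ℂ} (h : C' ⊗ₖ D' ∈ unitaryGroup (l × n) ℂ) :
    ∃ C D, C.IsHermitian ∧ D.IsHermitian ∧ cayley C ⊗ₖ cayley D = C' ⊗ₖ D' := by
  obtain ⟨s, hs, hC', hD'⟩ := exists_smul_mem_unitaryGroup_of_kronecker_mem h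
  obtain ⟨z, hz, hzC, hzD⟩ := exists_norm_eq_one_isUnit_one_sub_smul (s • C') (s⁻¹ • D')
  have hz₀ : z ≠ 0 := norm_ne_zero_iff.mp (hz ▸ one_ne_zero)
  obtain ⟨C, hC, hCU⟩ :=
    exists_isHermitian_cayley_eq (smul_mem_unitaryGroup_of_norm_eq_one hz hC') hzC
  obtain ⟨D, hD, hDU⟩ := exists_isHermitian_cayley_eq
    (smul_mem_unitaryGroup_of_norm_eq_one (by rw [norm_inv, hz, inv_one]) hD') hzD
  refine ⟨C, D, hC, hD, ?_⟩
  rw [hCU, hDU, smul_kronecker_inv_smul hz₀, smul_kronecker_inv_smul hs]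

end Matrix

theorem stmt_15 {m n : ℕ} (A : Matrix (Fin m) (Fin m) ℂ) (B : Matrix (Fin n) (Fin n) ℂ)
    (hA : A.IsHermitian) (hB : B.IsHermitian)
    (hsep : ∃ (C' : Matrix (Fin m) (Fin m) ℂ) (D' : Matrix (Fin n) (Fin n) ℂ),
      cayley (A ⊗ₖ B) = C' ⊗ₖ D') :
    ∃ (C : Matrix (Fin m) (Fin m) ℂ) (D : Matrix (Fin n) (Fin n) ℂ),
      C.IsHermitian ∧ D.IsHermitian ∧ cayley (A ⊗ₖ B) = cayley C ⊗ₖ cayley D := by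
  obtain ⟨C', D', hsep⟩ := hsep
  rcases isEmpty_or_nonempty (Fin m) with hm | hm
  · exact ⟨0, 0, isHermitian_zero, isHermitian_zero, Subsingleton.elim _ _⟩
  rcases isEmpty_or_nonempty (Fin n) with hn | hn
  · exact ⟨0, 0, isHermitian_zero, isHermitian_zero, Subsingleton.elim _ _⟩
  have hU : C' ⊗ₖ D' ∈ unitaryGroup (Fin m × Fin n) ℂ :=
    hsep ▸ (hA.kronecker hB).cayley_mem_unitaryGroup
  obtain ⟨C, D, hC, hD, hCD⟩ := exists_isHermitian_cayley_kronecker_cayley_eq hU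
  exact ⟨C, D, hC, hD, hsep.trans hCD.symm⟩
end

section
/- There do not exist real numbers a₁ ≠ a₂ and b₁ ≠ b₂ with a₁a₂b₁b₂ = 1 and a_j b_k (1 - a_j - b_k) = 1 for all j, k ∈ {1,2}. -/
open Matrix Kronecker Complex

theorem stmt_18 :
    ¬ ∃ a₁ a₂ b₁ b₂ : ℝ, a₁ ≠ a₂ ∧ b₁ ≠ b₂ ∧ a₁ * a₂ * b₁ * b₂ = 1 ∧
      a₁ * b₁ * (1 - a₁ - b₁) = 1 ∧ a₁ * b₂ * (1 - a₁ - b₂) = 1 ∧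
      a₂ * b₁ * (1 - a₂ - b₁) = 1 ∧ a₂ * b₂ * (1 - a₂ - b₂) = 1 := by
  rintro ⟨a₁, a₂, b₁, b₂, ha, hb, _, h11, h12, h21, h22⟩
  have ha1 : a₁ ≠ 0 := by rintro rfl; simp at h11
  have ha2 : a₂ ≠ 0 := by rintro rfl; simp at h21
  have hb' : b₁ - b₂ ≠ 0 := sub_ne_zero.mpr hb
  have k1 : a₁ * ((b₁ - b₂) * (1 - a₁ - b₁ - b₂)) = 0 := by nlinarith [h11, h12]
  have k2 : a₂ * ((b₁ - b₂) * (1 - a₂ - b₁ - b₂)) = 0 := by nlinarith [h21, h22]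
  have e1 : 1 - a₁ - b₁ - b₂ = 0 := by
    rcases mul_eq_zero.mp k1 with h | h
    · exact absurd h ha1
    · rcases mul_eq_zero.mp h with h | h
      · exact absurd h hb'
      · exact h
  have e2 : 1 - a₂ - b₁ - b₂ = 0 := by
    rcases mul_eq_zero.mp k2 with h | h
    · exact absurd h ha2
    · rcases mul_eq_zero.mp h with h | h
      · exact absurd h hb'
      · exact h
  exact ha (by linarith)
end
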